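/- arXiv:2109.12518 — 6 statements merged into one kernel-verified Lean document; each statement's English description precedes it below -/
import Mathlib

section
/- Let G be a finite group with a unitary representation U on ℂ^d and twirling operation 𝒢. Let S be a finite index set and P : S → (d×d matrices) a family of nonzero, Hermitian, idempotent matrices (orthogonal projections) that are pairwise orthogonal (P_λ P_μ = 0 for λ ≠ μ), each commuting with every U_g, and spanning the commutant: every d×d matrix X with U_g X = X U_g for all g ∈ G can be written as X = Σ_{λ∈S} c_λ • P_λ for some scalars c_λ ∈ ℂ. Then for every d×d matrix ρ, 𝒢(ρ) = Σ_{λ∈S} (tr(P_λ ρ) / tr(P_λ)) • P_λ. -/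
open scoped BigOperators Kronecker ComplexOrder
open Matrix

/-- von Neumann entropy of a matrix (via eigenvalues when Hermitian, else 0). -/
noncomputable def vnEntropy {ι : Type*} [Fintype ι] [DecidableEq ι]
    (ρ : Matrix ι ι ℂ) : ℝ :=
  if h : ρ.IsHermitian then -∑ i, h.eigenvalues i * Real.log (h.eigenvalues i) else 0

/-- Twirling operation induced by a family of matrices indexed by a finite group. -/
noncomputable def twirl {G ι : Type*} [Fintype G] [Fintype ι]
    (U : G → Matrix ι ι ℂ) (X : Matrix ι ι ℂ) : Matrix ι ι ℂ :=
  (Fintype.card G : ℂ)⁻¹ • ∑ g, U g * X * (U g)ᴴ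

/-- Apply a real function spectrally to a Hermitian matrix (0 otherwise). -/
noncomputable def matFun {ι : Type*} [Fintype ι] [DecidableEq ι]
    (f : ℝ → ℝ) (ρ : Matrix ι ι ℂ) : Matrix ι ι ℂ :=
  if h : ρ.IsHermitian then
    (h.eigenvectorUnitary : Matrix ι ι ℂ) *
      Matrix.diagonal (fun i => (f (h.eigenvalues i) : ℂ)) *
      (star (h.eigenvectorUnitary : Matrix ι ι ℂ))
  else 0

/-- Spectral power `ρ ^ t` with the convention `0 ^ t = 0`. -/
noncomputable def matPow {ι : Type*} [Fintype ι] [DecidableEq ι]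
    (ρ : Matrix ι ι ℂ) (t : ℝ) : Matrix ι ι ℂ :=
  matFun (fun x => if x = 0 then 0 else x ^ t) ρ

/-- Spectral logarithm with the convention `log 0 = 0`. -/
noncomputable def matLog {ι : Type*} [Fintype ι] [DecidableEq ι]
    (ρ : Matrix ι ι ℂ) : Matrix ι ι ℂ :=
  matFun Real.log ρ

/-- Absolute value `|M| = √(MᴴM)`. -/
noncomputable def matAbs {ι : Type*} [Fintype ι] [DecidableEq ι]
    (M : Matrix ι ι ℂ) : Matrix ι ι ℂ :=
  matPow (Mᴴ * M) (1/2 : ℝ)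


/-- Structural formula for the twirl under the multiplicity-free condition:
if the commutant of the representation is spanned by mutually orthogonal
projections `P λ`, then `𝒢(ρ) = Σ_λ (tr(P_λ ρ)/tr(P_λ)) • P_λ`. -/
theorem twirl_eq_sum_proj {G : Type*} [Group G] [Fintype G] {d : ℕ}
    (U : G → Matrix (Fin d) (Fin d) ℂ)
    (hU : ∀ g, U g ∈ Matrix.unitaryGroup (Fin d) ℂ)
    (hU1 : U 1 = 1) (hUmul : ∀ g g', U (g * g') = U g * U g')
    {S : Type*} [Fintype S] (P : S → Matrix (Fin d) (Fin d) ℂ)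
    (hPne : ∀ l, P l ≠ 0)
    (hPherm : ∀ l, (P l).IsHermitian)
    (hPidem : ∀ l, P l * P l = P l)
    (hPorth : ∀ l m, l ≠ m → P l * P m = 0)
    (hPcomm : ∀ l g, U g * P l = P l * U g)
    (hPspan : ∀ X : Matrix (Fin d) (Fin d) ℂ,
      (∀ g, U g * X = X * U g) → ∃ c : S → ℂ, X = ∑ l, c l • P l)
    (ρ : Matrix (Fin d) (Fin d) ℂ) :
    twirl U ρ = ∑ l, ((P l * ρ).trace / (P l).trace) • P l := by
  classical
  have hcard : (Fintype.card G : ℂ) ≠ 0 := by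
    exact_mod_cast Nat.cast_ne_zero.mpr Fintype.card_ne_zero
  -- traces of the projections are nonzero
  have htr : ∀ l, (P l).trace ≠ 0 := by
    intro l hl
    apply hPne l
    have hP : (P l)ᴴ * P l = P l := by rw [(hPherm l).eq, hPidem l]
    have hsum : ∑ i, ∑ k, (Complex.normSq (P l k i) : ℂ) = 0 := by
      have h0 : ((P l)ᴴ * P l).trace = 0 := by rw [hP, hl]
      simpa [Matrix.trace, Matrix.mul_apply, Matrix.conjTranspose_apply, Matrix.diag,
        Complex.normSq_eq_conj_mul_self] using h0
    have hre : ∑ i, ∑ k, Complex.normSq (P l k i) = 0 := by exact_mod_cast hsum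
    ext i j
    have h1 := (Finset.sum_eq_zero_iff_of_nonneg (fun i _ =>
      Finset.sum_nonneg fun k _ => Complex.normSq_nonneg _)).mp hre j (Finset.mem_univ _)
    have h2 := (Finset.sum_eq_zero_iff_of_nonneg (fun k _ =>
      Complex.normSq_nonneg _)).mp h1 i (Finset.mem_univ _)
    simpa [Matrix.zero_apply] using Complex.normSq_eq_zero.mp h2
  have hstar : ∀ g, (U g)ᴴ * U g = 1 := fun g => (hU g).1
  -- the twirl lies in the commutant
  have hcommT : ∀ g, U g * twirl U ρ = twirl U ρ * U g := by
    intro g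
    simp only [twirl, Matrix.mul_smul, Matrix.smul_mul, Finset.mul_sum, Finset.sum_mul]
    congr 1
    rw [← Equiv.sum_comp (Equiv.mulLeft g) (fun h => U h * ρ * (U h)ᴴ * U g)]
    refine Finset.sum_congr rfl fun h _ => ?_
    have h1 : U (g * h) = U g * U h := hUmul g h
    have h2 : (U (g * h))ᴴ * U g = (U h)ᴴ := by
      rw [h1, Matrix.conjTranspose_mul, Matrix.mul_assoc, hstar g, Matrix.mul_one]
    calc U g * (U h * ρ * (U h)ᴴ)
        = U (g * h) * ρ * (U h)ᴴ := by rw [h1]; simp [Matrix.mul_assoc]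
      _ = U (g * h) * ρ * ((U (g * h))ᴴ * U g) := by rw [h2]
      _ = U (Equiv.mulLeft g h) * ρ * (U (Equiv.mulLeft g h))ᴴ * U g := by
          simp [Matrix.mul_assoc]
  obtain ⟨c, hc⟩ := hPspan (twirl U ρ) hcommT
  -- trace computation: tr(P m * twirl) = tr(P m * ρ)
  have htw : ∀ m, (P m * twirl U ρ).trace = (P m * ρ).trace := by
    intro m
    have hterm : ∀ g, (P m * (U g * ρ * (U g)ᴴ)).trace = (P m * ρ).trace := by
      intro g
      have hc1 : (U g)ᴴ * P m = P m * (U g)ᴴ := by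
        have h3 := congrArg Matrix.conjTranspose (hPcomm m g)
        simpa [Matrix.conjTranspose_mul, (hPherm m).eq] using h3.symm
      calc (P m * (U g * ρ * (U g)ᴴ)).trace
          = ((U g * ρ * (U g)ᴴ) * P m).trace := Matrix.trace_mul_comm _ _
        _ = (U g * (ρ * P m) * (U g)ᴴ).trace := by
            rw [Matrix.mul_assoc (U g * ρ) _ _, hc1]
            simp [Matrix.mul_assoc]
        _ = ((U g)ᴴ * U g * (ρ * P m)).trace := Matrix.trace_mul_cycle _ _ _
        _ = (ρ * P m).trace := by rw [hstar g, Matrix.one_mul]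
        _ = (P m * ρ).trace := Matrix.trace_mul_comm _ _
    simp only [twirl, Matrix.mul_smul, Finset.mul_sum, Matrix.trace_smul, Matrix.trace_sum]
    rw [Finset.sum_congr rfl fun g _ => hterm g]
    simp [Finset.sum_const, smul_smul, inv_mul_cancel₀ hcard]
  -- compute the coefficients
  have hcm : ∀ m, c m = (P m * ρ).trace / (P m).trace := by
    intro m
    have h1 : (P m * twirl U ρ).trace = c m * (P m).trace := by
      rw [hc, Finset.mul_sum, Matrix.trace_sum, Finset.sum_eq_single m]
      · rw [Matrix.mul_smul, Matrix.trace_smul, hPidem m]; simp [smul_eq_mul]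
      · intro l _ hl
        rw [Matrix.mul_smul, Matrix.trace_smul, hPorth m l (Ne.symm hl)]
        simp
      · intro h; exact absurd (Finset.mem_univ m) h
    have h2 := (htw m).symm.trans h1
    rw [eq_div_iff (htr m)]
    exact h2.symm
  rw [hc]
  exact Finset.sum_congr rfl fun l _ => by rw [hcm l]
end

section
/- Let G be a finite group with a unitary representation U on ℂ^d and twirling operation 𝒢. Suppose there is a finite family P : S → (d×d matrices) of nonzero, Hermitian, idempotent matrices (orthogonal projections) that are pairwise orthogonal (P_λ P_μ = 0 for λ ≠ μ), each commuting with every U_g, and spanning the commutant: every d×d matrix X with U_g X = X U_g for all g ∈ G can be written as X = Σ_{λ∈S} c_λ • P_λ for some scalars c_λ ∈ ℂ. Then for all d×d matrices ρ and σ, 𝒢(ρ) · 𝒢(σ) = 𝒢(σ) · 𝒢(ρ). -/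
open scoped BigOperators Kronecker ComplexOrder
open Matrix

/-- Forward direction of the Lemma of Section II.C: if the commutant of the
representation is spanned by mutually orthogonal projections, then all twirled
matrices commute. -/
theorem twirl_comm_of_multiplicity_free {G : Type*} [Group G] [Fintype G] {d : ℕ}
    (U : G → Matrix (Fin d) (Fin d) ℂ)
    (hU : ∀ g, U g ∈ Matrix.unitaryGroup (Fin d) ℂ)
    (hU1 : U 1 = 1) (hUmul : ∀ g g', U (g * g') = U g * U g')
    {S : Type*} [Fintype S] (P : S → Matrix (Fin d) (Fin d) ℂ)
    (hPne : ∀ l, P l ≠ 0)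
    (hPherm : ∀ l, (P l).IsHermitian)
    (hPidem : ∀ l, P l * P l = P l)
    (hPorth : ∀ l m, l ≠ m → P l * P m = 0)
    (hPcomm : ∀ l g, U g * P l = P l * U g)
    (hPspan : ∀ X : Matrix (Fin d) (Fin d) ℂ,
      (∀ g, U g * X = X * U g) → ∃ c : S → ℂ, X = ∑ l, c l • P l)
    (ρ σ : Matrix (Fin d) (Fin d) ℂ) :
    twirl U ρ * twirl U σ = twirl U σ * twirl U ρ := by
  classical
  -- star of U g is U g⁻¹
  have hstar : ∀ g : G, (U g)ᴴ = U g⁻¹ := by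
    intro g
    have h1 : (U g)ᴴ * U g = 1 := mem_unitaryGroup_iff'.mp (hU g)
    have h2 : U g * U g⁻¹ = 1 := by rw [← hUmul, mul_inv_cancel, hU1]
    calc (U g)ᴴ = (U g)ᴴ * (U g * U g⁻¹) := by rw [h2, mul_one]
      _ = ((U g)ᴴ * U g) * U g⁻¹ := by rw [mul_assoc]
      _ = U g⁻¹ := by rw [h1, one_mul]
  -- twirled matrices lie in the commutant
  have hcomm : ∀ (X : Matrix (Fin d) (Fin d) ℂ) (g : G),
      U g * twirl U X = twirl U X * U g := by
    intro X g
    have h2 : (U g)ᴴ * U g = 1 := mem_unitaryGroup_iff'.mp (hU g)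
    simp only [twirl, Matrix.mul_smul, Matrix.smul_mul, Finset.mul_sum, Finset.sum_mul]
    congr 1
    refine Fintype.sum_equiv (Equiv.mulLeft g) _ _ ?_
    intro h
    show U g * (U h * X * (U h)ᴴ) = U (g * h) * X * (U (g * h))ᴴ * U g
    have hs : (U (g * h))ᴴ = (U h)ᴴ * (U g)ᴴ := by
      rw [hstar, hstar, hstar, _root_.mul_inv_rev, hUmul]
    rw [hs]
    calc U g * (U h * X * (U h)ᴴ) = U g * U h * X * (U h)ᴴ := by
          simp [mul_assoc]
      _ = U (g * h) * X * ((U h)ᴴ * ((U g)ᴴ * U g)) := by rw [h2, hUmul]; simp [mul_assoc]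
      _ = U (g * h) * X * ((U h)ᴴ * (U g)ᴴ) * U g := by simp [mul_assoc]
  obtain ⟨c, hc⟩ := hPspan (twirl U ρ) (hcomm ρ)
  obtain ⟨c', hc'⟩ := hPspan (twirl U σ) (hcomm σ)
  have hP : ∀ l m, Commute (P l) (P m) := by
    intro l m
    rcases eq_or_ne l m with rfl | h
    · exact Commute.refl _
    · unfold Commute SemiconjBy
      rw [hPorth l m h, hPorth m l h.symm]
  rw [hc, hc']
  exact Commute.sum_left _ _ _ fun l _ =>
    Commute.sum_right _ _ _ fun m _ => ((hP l m).smul_left (c l)).smul_right (c' m)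
end

section
/- Let G be a finite group with a unitary representation U on ℂ^d and twirling operation 𝒢. Suppose that for all density matrices ρ and σ on ℂ^d one has 𝒢(ρ) · 𝒢(σ) = 𝒢(σ) · 𝒢(ρ). Then the commutant of the representation is commutative: for any two d×d matrices X and Y satisfying U_g X = X U_g and U_g Y = Y U_g for all g ∈ G, one has X Y = Y X. -/
open scoped BigOperators Kronecker ComplexOrder
open Matrix

/-! Elements of the commutant are fixed by the twirl. Density matrices span all matrices (the
positive semidefinite ones do, and a nonzero one is a positive multiple of a density matrix), so by
linearity of the twirl the hypothesis extends to twirls of arbitrary matrices, in particular to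
`X = twirl U X` and `Y = twirl U Y`. -/

theorem LinearMap.commute_of_commute_on_span_eq_top {R M A : Type*} [CommSemiring R]
    [AddCommMonoid M] [Module R M] [Semiring A] [Algebra R A] (f : M →ₗ[R] A) {s : Set M}
    (hs : Submodule.span R s = ⊤) (h : ∀ x ∈ s, ∀ y ∈ s, Commute (f x) (f y)) (x y : M) :
    Commute (f x) (f y) := by
  have commute_left (a : A) (ha : ∀ z ∈ s, Commute (f z) a) (x : M) : Commute (f x) a := by
    have hx : x ∈ Submodule.span R s := hs ▸ Submodule.mem_top
    induction hx using Submodule.span_induction with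
    | mem z hz => exact ha z hz
    | zero => simp
    | add _ _ _ _ h₁ h₂ => simpa using h₁.add_left h₂
    | smul c _ _ h => simpa using h.smul_left c
  exact commute_left _ (fun z hz => (commute_left _ (fun w hw => h w hw z hz) y).symm) x

namespace Matrix

variable {n : Type*} [Fintype n] [DecidableEq n]

open scoped MatrixOrder Matrix.Norms.L2Operator in
theorem span_posSemidef : Submodule.span ℂ {A : Matrix n n ℂ | A.PosSemidef} = ⊤ := by
  simpa only [nonneg_iff_posSemidef] using CStarAlgebra.span_nonneg (A := Matrix n n ℂ)

theorem span_posSemidef_trace_eq_one :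
    Submodule.span ℂ {ρ : Matrix n n ℂ | ρ.PosSemidef ∧ ρ.trace = 1} = ⊤ := by
  rw [eq_top_iff, ← span_posSemidef, Submodule.span_le]
  intro P (hP : P.PosSemidef)
  obtain h | h := eq_or_ne P.trace 0
  · simp [hP.trace_eq_zero_iff.mp h]
  have htr : 0 < P.trace := hP.trace_nonneg.lt_of_ne' h
  have hρ : (P.trace⁻¹ • P).PosSemidef ∧ (P.trace⁻¹ • P).trace = 1 :=
    ⟨hP.smul (RCLike.inv_pos.mpr htr).le,
      by rw [trace_smul, smul_eq_mul, inv_mul_cancel₀ h]⟩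
  have hP_eq : P = P.trace • (P.trace⁻¹ • P) := by
    rw [smul_smul, mul_inv_cancel₀ h, one_smul]
  rw [hP_eq]
  exact Submodule.smul_mem _ _ (Submodule.subset_span hρ)

end Matrix

section Twirl

variable {G ι : Type*} [Fintype G] [Fintype ι]

noncomputable def twirlLinearMap (U : G → Matrix ι ι ℂ) :
    Matrix ι ι ℂ →ₗ[ℂ] Matrix ι ι ℂ where
  toFun := twirl U
  map_add' X Y := by simp [twirl, mul_add, add_mul, Finset.sum_add_distrib]
  map_smul' c X := by simp [twirl, ← Finset.smul_sum, smul_comm c]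

@[simp]
theorem twirlLinearMap_apply (U : G → Matrix ι ι ℂ) (X : Matrix ι ι ℂ) :
    twirlLinearMap U X = twirl U X := rfl

theorem twirl_eq_self [Nonempty G] [DecidableEq ι] {U : G → Matrix ι ι ℂ}
    (hU : ∀ g, U g ∈ Matrix.unitaryGroup ι ℂ) {X : Matrix ι ι ℂ}
    (hX : ∀ g, U g * X = X * U g) : twirl U X = X := by
  have hconj (g : G) : U g * X * (U g)ᴴ = X := by
    rw [hX g, mul_assoc, ← star_eq_conjTranspose, Matrix.mem_unitaryGroup_iff.mp (hU g), mul_one]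
  have hcard : (Fintype.card G : ℂ) ≠ 0 := Nat.cast_ne_zero.mpr Fintype.card_ne_zero
  simp only [twirl, hconj, Finset.sum_const, Finset.card_univ, ← Nat.cast_smul_eq_nsmul ℂ,
    smul_smul, inv_mul_cancel₀ hcard, one_smul]

end Twirl

theorem commutant_comm_of_twirl_comm_general {G : Type*} [Group G] [Fintype G] {d : ℕ}
    (U : G → Matrix (Fin d) (Fin d) ℂ)
    (hU : ∀ g, U g ∈ Matrix.unitaryGroup (Fin d) ℂ)
    (htwirl : ∀ ρ σ : Matrix (Fin d) (Fin d) ℂ,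
      ρ.PosSemidef → ρ.trace = 1 → σ.PosSemidef → σ.trace = 1 →
        twirl U ρ * twirl U σ = twirl U σ * twirl U ρ)
    (X Y : Matrix (Fin d) (Fin d) ℂ)
    (hX : ∀ g, U g * X = X * U g) (hY : ∀ g, U g * Y = Y * U g) :
    X * Y = Y * X := by
  have hcomm : Commute (twirl U X) (twirl U Y) := by
    simpa using (twirlLinearMap U).commute_of_commute_on_span_eq_top
      Matrix.span_posSemidef_trace_eq_one
      (fun ρ hρ σ hσ => htwirl ρ σ hρ.1 hρ.2 hσ.1 hσ.2) X Y
  rwa [twirl_eq_self hU hX, twirl_eq_self hU hY] at hcomm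

/-- Converse direction of the Lemma of Section II.C: if all twirled density
matrices commute, then the commutant of the representation is commutative. -/
theorem commutant_comm_of_twirl_comm {G : Type*} [Group G] [Fintype G] {d : ℕ}
    (U : G → Matrix (Fin d) (Fin d) ℂ)
    (hU : ∀ g, U g ∈ Matrix.unitaryGroup (Fin d) ℂ)
    (hU1 : U 1 = 1) (hUmul : ∀ g g', U (g * g') = U g * U g')
    (htwirl : ∀ ρ σ : Matrix (Fin d) (Fin d) ℂ,
      ρ.PosSemidef → ρ.trace = 1 → σ.PosSemidef → σ.trace = 1 →
        twirl U ρ * twirl U σ = twirl U σ * twirl U ρ)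
    (X Y : Matrix (Fin d) (Fin d) ℂ)
    (hX : ∀ g, U g * X = X * U g) (hY : ∀ g, U g * Y = Y * U g) :
    X * Y = Y * X :=
  commutant_comm_of_twirl_comm_general U hU htwirl X Y hX hY
end

section
/- Let a, f ≥ 1 and let v ∈ ℂ^{a·f} be a vector indexed by pairs (i,j) ∈ Fin a × Fin f, and let X = v v† be the associated rank-one positive semidefinite matrix on ℂ^a ⊗ ℂ^f, i.e., X((i,j),(k,l)) = v(i,j) · conj(v(k,l)). Then |τ_F(X)| = √(tr_F X) ⊗ (√(tr_A X))ᵀ, where τ_F is the partial transpose on the second factor, tr_F and tr_A are the partial traces, √ denotes the positive semidefinite square root of a positive semidefinite matrix, ᵀ denotes matrix transpose, and ⊗ is the Kronecker product. -/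
open scoped BigOperators Kronecker ComplexOrder
open Matrix

/-- Partial trace over the second (F) factor. -/
noncomputable def ptraceF {α β : Type*} [Fintype β]
    (X : Matrix (α × β) (α × β) ℂ) : Matrix α α ℂ :=
  fun i k => ∑ j, X (i, j) (k, j)

/-- Partial trace over the first (A) factor. -/
noncomputable def ptraceA {α β : Type*} [Fintype α]
    (X : Matrix (α × β) (α × β) ℂ) : Matrix β β ℂ :=
  fun j l => ∑ i, X (i, j) (i, l)

/-- Partial transpose on the second (F) factor. -/
def ptransF {α β : Type*} (X : Matrix (α × β) (α × β) ℂ) :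
    Matrix (α × β) (α × β) ℂ :=
  fun p q => X (p.1, q.2) (q.1, p.2)

/-- Quantum Rényi entropy `H_β(ρ) = (1/(1−β)) log tr[ρ^β]`. -/
noncomputable def renyiEntropy {ι : Type*} [Fintype ι] [DecidableEq ι]
    (β : ℝ) (ρ : Matrix ι ι ℂ) : ℝ :=
  (1 - β)⁻¹ * Real.log ((matPow ρ β).trace.re)

/-!
Write `T = τ_F(vv†)`. Entrywise, `(TᴴT)((i,j),(k,l)) = (∑ₙ v(i,n) v̄(k,n)) · (∑ₘ v̄(m,j) v(m,l))`,
so `TᴴT = tr_F X ⊗ (tr_A X)ᵀ`. Both partial traces are Gram matrices of the coefficient matrix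
`(v(i,j))ᵢⱼ`, hence positive semidefinite, and by uniqueness of positive square roots the square
root commutes with Kronecker products and with transposition.
-/

open scoped MatrixOrder

namespace Matrix

section Sqrt

variable {𝕜 m n : Type*} [RCLike 𝕜] [Fintype m] [Fintype n] [DecidableEq m] [DecidableEq n]

lemma cfcSqrt_kronecker {A : Matrix m m 𝕜} {B : Matrix n n 𝕜} (hA : A.PosSemidef)
    (hB : B.PosSemidef) : CFC.sqrt (A ⊗ₖ B) = CFC.sqrt A ⊗ₖ CFC.sqrt B :=
  CFC.sqrt_unique
    (by rw [← mul_kronecker_mul, CFC.sqrt_mul_sqrt_self A hA.nonneg,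
      CFC.sqrt_mul_sqrt_self B hB.nonneg])
    ((CFC.sqrt_nonneg A).posSemidef.kronecker (CFC.sqrt_nonneg B).posSemidef).nonneg

lemma cfcSqrt_transpose {A : Matrix n n 𝕜} (hA : A.PosSemidef) :
    CFC.sqrt Aᵀ = (CFC.sqrt A)ᵀ :=
  CFC.sqrt_unique (by rw [← transpose_mul, CFC.sqrt_mul_sqrt_self A hA.nonneg])
    (CFC.sqrt_nonneg A).posSemidef.transpose.nonneg

end Sqrt

end Matrix

lemma matFun_eq_cfc {ι : Type*} [Fintype ι] [DecidableEq ι] {ρ : Matrix ι ι ℂ}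
    (hρ : ρ.IsHermitian) (g : ℝ → ℝ) : matFun g ρ = cfc g ρ := by
  rw [matFun, dif_pos hρ, hρ.cfc_eq, IsHermitian.cfc, Unitary.conjStarAlgAut_apply]
  rfl

lemma matPow_half_eq_cfcSqrt {ι : Type*} [Fintype ι] [DecidableEq ι] {ρ : Matrix ι ι ℂ}
    (hρ : ρ.PosSemidef) : matPow ρ (1 / 2 : ℝ) = CFC.sqrt ρ := by
  have hsqrt : (fun x : ℝ => if x = 0 then 0 else x ^ (1 / 2 : ℝ)) = Real.sqrt := by
    funext x
    split_ifs with hx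
    · simp [hx]
    · rw [Real.sqrt_eq_rpow]
  rw [matPow, hsqrt, matFun_eq_cfc hρ.1, CFC.sqrt_eq_real_sqrt ρ hρ.nonneg, cfcₙ_eq_cfc]

section RankOne

variable {α β : Type*} (v : α × β → ℂ)

lemma ptraceF_vecMulVec_star [Fintype β] :
    ptraceF (vecMulVec v (star v)) = of (Function.curry v) * (of (Function.curry v))ᴴ := by
  ext i k
  simp [ptraceF, mul_apply, vecMulVec_apply]

lemma ptraceA_vecMulVec_star [Fintype α] :
    ptraceA (vecMulVec v (star v)) = (of (Function.curry v))ᵀ * (of (Function.curry v))ᵀᴴ := by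
  ext j l
  simp [ptraceA, mul_apply, vecMulVec_apply]

lemma posSemidef_ptraceF_vecMulVec_star [Fintype α] [Fintype β] :
    (ptraceF (vecMulVec v (star v))).PosSemidef := by
  rw [ptraceF_vecMulVec_star]
  exact posSemidef_self_mul_conjTranspose _

lemma posSemidef_ptraceA_vecMulVec_star [Fintype α] [Fintype β] :
    (ptraceA (vecMulVec v (star v))).PosSemidef := by
  rw [ptraceA_vecMulVec_star]
  exact posSemidef_self_mul_conjTranspose _

lemma conjTranspose_ptransF_mul_self_vecMulVec_star [Fintype α] [Fintype β] :
    (ptransF (vecMulVec v (star v)))ᴴ * ptransF (vecMulVec v (star v))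
      = ptraceF (vecMulVec v (star v)) ⊗ₖ (ptraceA (vecMulVec v (star v)))ᵀ := by
  ext ⟨i, j⟩ ⟨k, l⟩
  simp only [mul_apply, conjTranspose_apply, ptransF, kroneckerMap_apply, transpose_apply,
    ptraceF, ptraceA, vecMulVec_apply, Fintype.sum_prod_type, Pi.star_apply]
  rw [Finset.sum_comm, Finset.sum_mul_sum]
  refine Finset.sum_congr rfl fun n _ => Finset.sum_congr rfl fun m _ => ?_
  simp only [star_mul', star_star]
  ring

end RankOne

theorem abs_ptransF_rank_one_general {a f : ℕ}
    (v : Fin a × Fin f → ℂ) :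
    matAbs (ptransF (Matrix.vecMulVec v (star v)))
      = matPow (ptraceF (Matrix.vecMulVec v (star v))) (1/2 : ℝ) ⊗ₖ
          (matPow (ptraceA (Matrix.vecMulVec v (star v))) (1/2 : ℝ))ᵀ := by
  have hF := posSemidef_ptraceF_vecMulVec_star v
  have hA := posSemidef_ptraceA_vecMulVec_star v
  rw [matAbs, conjTranspose_ptransF_mul_self_vecMulVec_star,
    matPow_half_eq_cfcSqrt (hF.kronecker hA.transpose), matPow_half_eq_cfcSqrt hF,
    matPow_half_eq_cfcSqrt hA, cfcSqrt_kronecker hF hA.transpose, cfcSqrt_transpose hA]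

/-- Eq. (M6): for a rank-one positive semidefinite bipartite operator `X = vv†`,
`|τ_F(X)| = √(tr_F X) ⊗ (√(tr_A X))ᵀ`. -/
theorem abs_ptransF_rank_one {a f : ℕ} (ha : 1 ≤ a) (hf : 1 ≤ f)
    (v : Fin a × Fin f → ℂ) :
    matAbs (ptransF (Matrix.vecMulVec v (star v)))
      = matPow (ptraceF (Matrix.vecMulVec v (star v))) (1/2 : ℝ) ⊗ₖ
          (matPow (ptraceA (Matrix.vecMulVec v (star v))) (1/2 : ℝ))ᵀ :=
  abs_ptransF_rank_one_general v
end

section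
/- Let a, f ≥ 1 and let Y and Z be Hermitian matrices on ℂ^a ⊗ ℂ^f (indexed by pairs in Fin a × Fin f). Assume Y is positive semidefinite and its partial transpose τ_F(Y) is also positive semidefinite (i.e., Y is a PPT operator). Assume moreover that there is a real number c ≥ 0 and a positive semidefinite matrix P such that |τ_F(Z)| ≤ c • P in the Loewner order. Then Re tr[Y · Z] ≤ c · Re tr[τ_F(Y) · P]. -/
open scoped BigOperators Kronecker ComplexOrder
open Matrix

/-!
Since the partial transpose is an involutive permutation of matrix entries, it preserves the
trace pairing: `tr[Y Z] = tr[τ_F(Y) τ_F(Z)]`. The map `X ↦ tr[A X]` is monotone for `A ≥ 0`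
(write `A = S⋆S`, so `tr[A X] = tr[S X S⋆]`), and every self-adjoint `B` satisfies
`B ≤ |B|` because `|B| - B = 2 B⁻`. Applying this with `A = τ_F(Y)` to
`τ_F(Z) ≤ |τ_F(Z)| ≤ c P` gives the claim.
-/

open scoped MatrixOrder

section CFCAbs

variable {A : Type*} [NonUnitalRing A] [StarRing A] [TopologicalSpace A] [Module ℝ A]
  [SMulCommClass ℝ A A] [IsScalarTower ℝ A A]
  [NonUnitalContinuousFunctionalCalculus ℝ A IsSelfAdjoint] [PartialOrder A] [StarOrderedRing A]
  [NonnegSpectrumClass ℝ A] [IsTopologicalRing A] [T2Space A]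

lemma CFC.le_abs (a : A) (ha : IsSelfAdjoint a := by cfc_tac) : a ≤ CFC.abs a := by
  rw [← sub_nonneg, CFC.abs_sub_self a]
  exact smul_nonneg zero_le_two (CFC.negPart_nonneg a)

end CFCAbs

section MatrixAbs

variable {n : Type*} [Fintype n] [DecidableEq n]

lemma matFun_eq_cfc_s13 (f : ℝ → ℝ) {A : Matrix n n ℂ} (hA : A.IsHermitian) :
    matFun f A = cfc f A := by
  rw [hA.cfc_eq, Matrix.IsHermitian.cfc, Unitary.conjStarAlgAut_apply, matFun, dif_pos hA]
  rfl

lemma matAbs_eq_cfcAbs (M : Matrix n n ℂ) : matAbs M = CFC.abs M := by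
  have hMM : 0 ≤ star M * M := star_mul_self_nonneg M
  rw [matAbs, matPow, ← star_eq_conjTranspose, matFun_eq_cfc_s13 _ hMM.isSelfAdjoint, CFC.abs,
    CFC.sqrt_eq_real_sqrt _ hMM, cfcₙ_eq_cfc]
  refine cfc_congr (a := star M * M) fun (x : ℝ) hx => ?_
  have hx0 : 0 ≤ x := spectrum_nonneg_of_nonneg hMM hx
  rcases hx0.eq_or_lt with rfl | hpos
  · simp
  · simp [hpos.ne', Real.sqrt_eq_rpow]

end MatrixAbs

namespace Matrix

variable {n 𝕜 : Type*} [Fintype n] [DecidableEq n] [RCLike 𝕜]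

lemma trace_mul_nonneg {A B : Matrix n n 𝕜} (hA : 0 ≤ A) (hB : 0 ≤ B) :
    0 ≤ (A * B).trace := by
  obtain ⟨S, rfl⟩ := CStarAlgebra.nonneg_iff_eq_star_mul_self.mp hA
  rw [mul_assoc, trace_mul_comm, mul_assoc, ← mul_assoc]
  simpa using (star_left_conjugate_nonneg hB (star S)).posSemidef.trace_nonneg

lemma trace_mul_le_trace_mul {A B C : Matrix n n 𝕜} (hA : 0 ≤ A) (hBC : B ≤ C) :
    (A * B).trace ≤ (A * C).trace := by
  rw [← sub_nonneg, ← trace_sub, ← mul_sub]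
  exact trace_mul_nonneg hA (sub_nonneg.mpr hBC)

end Matrix

section PartialTranspose

variable {α β : Type*}

lemma conjTranspose_ptransF (X : Matrix (α × β) (α × β) ℂ) :
    (ptransF X)ᴴ = ptransF Xᴴ :=
  rfl

lemma Matrix.IsHermitian.ptransF {X : Matrix (α × β) (α × β) ℂ} (hX : X.IsHermitian) :
    (ptransF X).IsHermitian := by
  rw [IsHermitian, conjTranspose_ptransF, hX.eq]

lemma trace_ptransF_mul_ptransF [Fintype α] [Fintype β] (X W : Matrix (α × β) (α × β) ℂ) :
    (ptransF X * ptransF W).trace = (X * W).trace := by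
  simp only [trace, diag, mul_apply, ← Finset.sum_product', Finset.univ_product_univ]
  let swapSeconds : (α × β) × (α × β) ≃ (α × β) × (α × β) :=
    ⟨fun x => ((x.1.1, x.2.2), (x.2.1, x.1.2)), fun x => ((x.1.1, x.2.2), (x.2.1, x.1.2)),
      fun _ => rfl, fun _ => rfl⟩
  exact Fintype.sum_equiv swapSeconds _ _ fun _ => rfl

end PartialTranspose

theorem trace_le_of_ppt_of_abs_ptrans_le_general {a f : ℕ}
    (Y Z : Matrix (Fin a × Fin f) (Fin a × Fin f) ℂ)
    (hZherm : Z.IsHermitian)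
    (hYppt : (ptransF Y).PosSemidef)
    (c : ℝ)
    (P : Matrix (Fin a × Fin f) (Fin a × Fin f) ℂ)
    (hZbound : ((c : ℂ) • P - matAbs (ptransF Z)).PosSemidef) :
    ((Y * Z).trace).re ≤ c * ((ptransF Y * P).trace).re := by
  have hτY : 0 ≤ ptransF Y := hYppt.nonneg
  have hbound : CFC.abs (ptransF Z) ≤ (c : ℂ) • P := by
    rw [← matAbs_eq_cfcAbs]
    exact sub_nonneg.mp hZbound.nonneg
  calc ((Y * Z).trace).re = ((ptransF Y * ptransF Z).trace).re := by
        rw [trace_ptransF_mul_ptransF]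
    _ ≤ ((ptransF Y * CFC.abs (ptransF Z)).trace).re :=
        Complex.re_le_re (trace_mul_le_trace_mul hτY (CFC.le_abs _ hZherm.ptransF))
    _ ≤ ((ptransF Y * ((c : ℂ) • P)).trace).re :=
        Complex.re_le_re (trace_mul_le_trace_mul hτY hbound)
    _ = c * ((ptransF Y * P).trace).re := by
        rw [Matrix.mul_smul, trace_smul, smul_eq_mul, Complex.re_ofReal_mul]

/-- Core step of the strong converse for PPT decoders: if `Y` is PPT and
`|τ_F(Z)| ≤ c • P`, then `Re tr[Y Z] ≤ c · Re tr[τ_F(Y) P]`. -/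
theorem trace_le_of_ppt_of_abs_ptrans_le {a f : ℕ} (ha : 1 ≤ a) (hf : 1 ≤ f)
    (Y Z : Matrix (Fin a × Fin f) (Fin a × Fin f) ℂ)
    (hYherm : Y.IsHermitian) (hZherm : Z.IsHermitian)
    (hYpsd : Y.PosSemidef) (hYppt : (ptransF Y).PosSemidef)
    (c : ℝ) (hc : 0 ≤ c)
    (P : Matrix (Fin a × Fin f) (Fin a × Fin f) ℂ) (hP : P.PosSemidef)
    (hZbound : ((c : ℂ) • P - matAbs (ptransF Z)).PosSemidef) :
    ((Y * Z).trace).re ≤ c * ((ptransF Y * P).trace).re :=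
  trace_le_of_ppt_of_abs_ptrans_le_general Y Z hZherm hYppt c P hZbound
end

section
/- Let G be a finite group with a unitary representation U on ℂ^d and twirling operation 𝒢. Let L ≥ 1 and let Q : Fin L → (d×d matrices) be a family of Hermitian idempotent matrices with Q_l Q_{l'} = 0 for l ≠ l', Q_l U_g = U_g Q_l for all g ∈ G and l, and such that for all l ≠ l' and every d×d matrix X, 𝒢(Q_l X Q_{l'}) = 0 (the multiplicity-free condition: distinct Q_l project onto sums of mutually inequivalent irreducible components). Let ψ_l ∈ ℂ^d for l ∈ Fin L, let ζ = exp(2πi/L), and for each l ∈ Fin L define φ_l = (1/L) Σ_{l'∈Fin L} ζ^{−l'·l} Q_{l'} ψ_{l'} ∈ ℂ^d (the exponent being the product of the indices as integers). Let σ̄ = (1/L) Σ_{l'∈Fin L} Q_{l'} 𝒢(ψ_{l'} ψ_{l'}†) Q_{l'}. Then (1/|G|) Σ_{g∈G} Σ_{l∈Fin L} (U_g φ_l φ_l† U_g†) ⊗ e_{ll} = σ̄ ⊗ ((1/L) • 1_L), where e_{ll} is the L×L matrix with a single 1 in position (l,l), 1_L is the L×L identity, and ⊗ is the Kronecker product.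 -/
open scoped BigOperators Kronecker ComplexOrder
open Matrix

/-!
Expanding `φ_l φ_l†` gives a double sum over pairs `(a, b)` of the blocks `Q_a ψ_a ψ_b† Q_b`.
The twirl kills every off-diagonal block by the multiplicity-free condition; on the diagonal the
phases `ζ^(-a l)` have modulus one, and `Q_a`, commuting with the representation, passes through
the twirl. Hence every `l` contributes the same twirled state `σ̄ / L`, and summing it against the
diagonal units `e_ll` gives `σ̄ ⊗ 1_L / L`.
-/

namespace Matrix

variable {κ l m n p α : Type*}

theorem vecMulVec_sum_sum [NonUnitalNonAssocSemiring α] (s : Finset κ) (t : Finset κ)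
    (v : κ → m → α) (w : κ → n → α) :
    vecMulVec (∑ a ∈ s, v a) (∑ b ∈ t, w b) = ∑ a ∈ s, ∑ b ∈ t, vecMulVec (v a) (w b) := by
  ext i j
  simp only [vecMulVec_apply, Finset.sum_apply, sum_apply, Finset.sum_mul_sum]

theorem vecMulVec_mulVec_star_mulVec [Fintype n] [CommRing α] [StarRing α]
    (A B : Matrix m n α) (u w : n → α) :
    vecMulVec (A *ᵥ u) (star (B *ᵥ w)) = A * vecMulVec u (star w) * Bᴴ := by
  rw [star_mulVec, mul_vecMulVec, vecMulVec_mul]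

variable [CommSemiring α]

theorem sum_kronecker (s : Finset κ) (A : κ → Matrix l m α) (B : Matrix n p α) :
    (∑ i ∈ s, A i) ⊗ₖ B = ∑ i ∈ s, A i ⊗ₖ B :=
  LinearMap.map_sum₂ (kroneckerBilinear (R := α)) s A B

theorem kronecker_sum (s : Finset κ) (A : Matrix l m α) (B : κ → Matrix n p α) :
    A ⊗ₖ (∑ i ∈ s, B i) = ∑ i ∈ s, A ⊗ₖ B i :=
  map_sum (kroneckerBilinear (R := α) A) B s

end Matrix

theorem Complex.mul_star_self_of_norm_eq_one {z : ℂ} (hz : ‖z‖ = 1) : z * star z = 1 := by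
  rw [Complex.star_def, Complex.mul_conj', hz]; simp

theorem Complex.norm_exp_two_pi_I_div (L : ℕ) :
    ‖Complex.exp (2 * Real.pi * Complex.I / L)‖ = 1 := by
  rw [Complex.norm_exp]; simp

section Twirl

variable {G ι κ : Type*} [Fintype G] [Fintype ι] (U : G → Matrix ι ι ℂ)

theorem twirl_sum (s : Finset κ) (X : κ → Matrix ι ι ℂ) :
    twirl U (∑ a ∈ s, X a) = ∑ a ∈ s, twirl U (X a) := by
  simp only [twirl, Finset.mul_sum, Finset.sum_mul, ← Finset.smul_sum]
  rw [Finset.sum_comm]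

theorem twirl_smul (c : ℂ) (X : Matrix ι ι ℂ) : twirl U (c • X) = c • twirl U X := by
  simp only [twirl, mul_smul_comm, smul_mul_assoc, ← Finset.smul_sum, smul_comm c]

theorem twirl_mul_mul_of_commute {A B : Matrix ι ι ℂ} (hA : ∀ g, Commute A (U g))
    (hB : ∀ g, Commute B (U g)ᴴ) (X : Matrix ι ι ℂ) :
    twirl U (A * X * B) = A * twirl U X * B := by
  simp only [twirl, Finset.mul_sum, Finset.sum_mul, mul_smul_comm, smul_mul_assoc]
  refine congrArg _ (Finset.sum_congr rfl fun g _ => ?_)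
  simp only [← mul_assoc, ← (hA g).eq]
  simp only [mul_assoc, (hB g).eq]

theorem twirl_vecMulVec_sum_of_multiplicityFree [Fintype κ] (Q : κ → Matrix ι ι ℂ)
    (hQherm : ∀ a, (Q a).IsHermitian) (hQcomm : ∀ a g, Commute (Q a) (U g))
    (hQmf : ∀ a b, a ≠ b → ∀ X : Matrix ι ι ℂ, twirl U (Q a * X * Q b) = 0)
    (c : κ → ℂ) (r : ℂ) (hc : ∀ a, c a * star (c a) = r) (v : κ → ι → ℂ) :
    twirl U (vecMulVec (∑ a, c a • Q a *ᵥ v a) (star (∑ a, c a • Q a *ᵥ v a)))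
      = r • ∑ a, Q a * twirl U (vecMulVec (v a) (star (v a))) * Q a := by
  have hQcommH : ∀ a g, Commute (Q a) (U g)ᴴ := fun a g => by
    simpa only [star_eq_conjTranspose, (hQherm a).eq] using (hQcomm a g).star_star
  have hexpand : vecMulVec (∑ a, c a • Q a *ᵥ v a) (star (∑ a, c a • Q a *ᵥ v a))
      = ∑ a, ∑ b, (c a * star (c b)) • (Q a * vecMulVec (v a) (star (v b)) * Q b) := by
    simp only [star_sum, star_smul, vecMulVec_sum_sum, smul_vecMulVec, vecMulVec_smul,
      smul_smul, vecMulVec_mulVec_star_mulVec, (hQherm _).eq, mul_comm (star (c _))]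
  rw [hexpand, twirl_sum, Finset.smul_sum]
  refine Finset.sum_congr rfl fun a _ => ?_
  rw [twirl_sum, Finset.sum_eq_single a]
  · rw [twirl_smul, twirl_mul_mul_of_commute U (hQcomm a) (hQcommH a), hc]
  · intro b _ hba
    rw [twirl_smul, hQmf a b (Ne.symm hba), smul_zero]
  · simp

end Twirl

theorem averaged_state_eq_product_general
    {G : Type*} [Fintype G] {d : ℕ}
    (U : G → Matrix (Fin d) (Fin d) ℂ)
    (L : ℕ)
    (Q : Fin L → Matrix (Fin d) (Fin d) ℂ)
    (hQherm : ∀ l, (Q l).IsHermitian)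
    (hQcomm : ∀ l g, Q l * U g = U g * Q l)
    (hQmf : ∀ l l', l ≠ l' → ∀ X : Matrix (Fin d) (Fin d) ℂ,
      twirl U (Q l * X * Q l') = 0)
    (ψ : Fin L → Fin d → ℂ)
    (ζ : ℂ) (hζ : ζ = Complex.exp (2 * Real.pi * Complex.I / L))
    (φ : Fin L → Fin d → ℂ)
    (hφ : ∀ l, φ l =
      (L : ℂ)⁻¹ • ∑ l' : Fin L,
        (ζ ^ (-((l' : ℕ) * (l : ℕ) : ℤ))) • (Q l').mulVec (ψ l'))
    (σbar : Matrix (Fin d) (Fin d) ℂ)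
    (hσbar : σbar =
      (L : ℂ)⁻¹ • ∑ l' : Fin L,
        Q l' * twirl U (Matrix.vecMulVec (ψ l') (star (ψ l'))) * Q l') :
    (Fintype.card G : ℂ)⁻¹ •
        ∑ g, ∑ l : Fin L,
          (U g * Matrix.vecMulVec (φ l) (star (φ l)) * (U g)ᴴ) ⊗ₖ
            Matrix.single l l (1 : ℂ)
      = σbar ⊗ₖ ((L : ℂ)⁻¹ • (1 : Matrix (Fin L) (Fin L) ℂ)) := by
  set c : Fin L → Fin L → ℂ := fun l a => (L : ℂ)⁻¹ * ζ ^ (-((a : ℕ) * (l : ℕ) : ℤ))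
  have hc : ∀ l a, c l a * star (c l a) = (L : ℂ)⁻¹ * (L : ℂ)⁻¹ := fun l a => by
    have hζ_norm : ‖ζ ^ (-((a : ℕ) * (l : ℕ) : ℤ))‖ = 1 := by
      rw [norm_zpow, hζ, Complex.norm_exp_two_pi_I_div, _root_.one_zpow]
    rw [star_mul', mul_mul_mul_comm, Complex.mul_star_self_of_norm_eq_one hζ_norm, mul_one,
      star_inv₀, star_natCast]
  have hstate : ∀ l, twirl U (vecMulVec (φ l) (star (φ l))) = (L : ℂ)⁻¹ • σbar := fun l => by
    have hφc : φ l = ∑ a, c l a • Q a *ᵥ ψ a := by simp only [hφ l, Finset.smul_sum, smul_smul, c]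
    rw [hφc, twirl_vecMulVec_sum_of_multiplicityFree U Q hQherm hQcomm hQmf _ _ (hc l), hσbar,
      smul_smul]
  calc _ = ∑ l, twirl U (vecMulVec (φ l) (star (φ l))) ⊗ₖ single l l (1 : ℂ) := by
        simp only [Finset.sum_comm (γ := G), Finset.smul_sum, twirl, smul_kronecker, sum_kronecker]
    _ = σbar ⊗ₖ ((L : ℂ)⁻¹ • (1 : Matrix (Fin L) (Fin L) ℂ)) := by
        simp only [hstate, smul_kronecker, kronecker_smul, ← Finset.smul_sum, ← kronecker_sum,
          sum_single_one]

/-- The averaged-state computation Eq. (C38) in the proof of Lemma 3: under the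
multiplicity-free condition, the group average of the Fourier-rotated ensemble
equals a product state. -/
theorem averaged_state_eq_product
    {G : Type*} [Group G] [Fintype G] {d : ℕ}
    (U : G → Matrix (Fin d) (Fin d) ℂ)
    (hU : ∀ g, U g ∈ Matrix.unitaryGroup (Fin d) ℂ)
    (hU1 : U 1 = 1) (hUmul : ∀ g g', U (g * g') = U g * U g')
    (L : ℕ) (hL : 1 ≤ L)
    (Q : Fin L → Matrix (Fin d) (Fin d) ℂ)
    (hQherm : ∀ l, (Q l).IsHermitian)
    (hQidem : ∀ l, Q l * Q l = Q l)
    (hQorth : ∀ l l', l ≠ l' → Q l * Q l' = 0)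
    (hQcomm : ∀ l g, Q l * U g = U g * Q l)
    (hQmf : ∀ l l', l ≠ l' → ∀ X : Matrix (Fin d) (Fin d) ℂ,
      twirl U (Q l * X * Q l') = 0)
    (ψ : Fin L → Fin d → ℂ)
    (ζ : ℂ) (hζ : ζ = Complex.exp (2 * Real.pi * Complex.I / L))
    (φ : Fin L → Fin d → ℂ)
    (hφ : ∀ l, φ l =
      (L : ℂ)⁻¹ • ∑ l' : Fin L,
        (ζ ^ (-((l' : ℕ) * (l : ℕ) : ℤ))) • (Q l').mulVec (ψ l'))
    (σbar : Matrix (Fin d) (Fin d) ℂ)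
    (hσbar : σbar =
      (L : ℂ)⁻¹ • ∑ l' : Fin L,
        Q l' * twirl U (Matrix.vecMulVec (ψ l') (star (ψ l'))) * Q l') :
    (Fintype.card G : ℂ)⁻¹ •
        ∑ g, ∑ l : Fin L,
          (U g * Matrix.vecMulVec (φ l) (star (φ l)) * (U g)ᴴ) ⊗ₖ
            Matrix.single l l (1 : ℂ)
      = σbar ⊗ₖ ((L : ℂ)⁻¹ • (1 : Matrix (Fin L) (Fin L) ℂ)) :=
  averaged_state_eq_product_general U L Q hQherm hQcomm hQmf ψ ζ hζ φ hφ σbar hσbar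
end
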